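/- In the class Av(123,132): 321_n/(n·|Av_n(123,132)|) → 0 and 231_n/(n·|Av_n(123,132)|) → 1/2 as n → ∞. -/

import Mathlib

/-- `ConsecOcc p π i`: the word `π(i) π(i+1) … π(i+r-1)` (positions `0`-indexed)
is order-isomorphic to the pattern word `p 0, …, p (r-1)`. -/
def ConsecOcc {n r : ℕ} (p : Fin r → ℕ) (π : Equiv.Perm (Fin n)) (i : ℕ) : Prop :=
  ∃ h : i + r ≤ n, ∀ j k : Fin r,
    (π ⟨i + j.val, by have := j.isLt; omega⟩ < π ⟨i + k.val, by have := k.isLt; omega⟩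
      ↔ p j < p k)

/-- The number of consecutive occurrences of the pattern `p` in `π`. -/
noncomputable def occCount {n r : ℕ} (p : Fin r → ℕ) (π : Equiv.Perm (Fin n)) : ℕ :=
  Nat.card {i : ℕ // ConsecOcc p π i}

/-- `π` has no consecutive occurrence of any pattern in `ps`. -/
def AvoidsAll {n r : ℕ} (ps : List (Fin r → ℕ)) (π : Equiv.Perm (Fin n)) : Prop :=
  ∀ p ∈ ps, ∀ i, ¬ ConsecOcc p π i

-- Total number of consecutive occurrences of `p` over all size-`n` permutations satisfying `P`.
open scoped Classical in
noncomputable def totOcc {n r : ℕ} (p : Fin r → ℕ) (P : Equiv.Perm (Fin n) → Prop) : ℕ :=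
  ∑ π : Equiv.Perm (Fin n), if P π then occCount p π else 0

/-- The number of size-`n` permutations satisfying `P`. -/
noncomputable def classCard (n : ℕ) (P : Equiv.Perm (Fin n) → Prop) : ℕ :=
  Nat.card {π : Equiv.Perm (Fin n) // P π}

def p123 : Fin 3 → ℕ := ![1,2,3]
def p132 : Fin 3 → ℕ := ![1,3,2]
def p213 : Fin 3 → ℕ := ![2,1,3]
def p231 : Fin 3 → ℕ := ![2,3,1]
def p312 : Fin 3 → ℕ := ![3,1,2]
def p321 : Fin 3 → ℕ := ![3,2,1]

/-!
Read as a word, a permutation avoids the consecutive patterns `123` and `132` iff no letter is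
smaller than both of its two successors. The minimum of such a permutation therefore sits in one
of the last two positions; removing it (and, if it is second to last, also the last letter) gives
the involution-number recurrence `c (n + 2) = c (n + 1) + (n + 1) c n`, whence
`√(n + 1) ≤ c (n + 1) / c n ≤ 1 + √(n + 1)`. Inserting a new maximum right after a double descent
sends each `321`-occurrence to a distinct avoider of size `n + 1`, so there are at most
`c (n + 1) = o(n c n)` of them. Finally, every ascent of an avoider starts a `231`, and a
telescoping count gives `2 · #231 + #321 = n + O(1)` for each avoider, which forces the `231`
ratio to `1/2`.
-/

open Finset Equiv Filter Topology

namespace ConsecPattern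

variable {n m r : ℕ}

/-- The permutation as an `ℕ`-indexed word, with junk value `0` past its length. -/
def word (π : Perm (Fin n)) (i : ℕ) : ℕ := if h : i < n then π ⟨i, h⟩ else 0

lemma word_of_lt (π : Perm (Fin n)) {i : ℕ} (h : i < n) : word π i = π ⟨i, h⟩ := dif_pos h

lemma word_lt (π : Perm (Fin n)) {i : ℕ} (h : i < n) : word π i < n := by
  rw [word_of_lt π h]; exact Fin.isLt _

lemma word_ne (π : Perm (Fin n)) {i j : ℕ} (hi : i < n) (hj : j < n) (hij : i ≠ j) :
    word π i ≠ word π j := by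
  rw [word_of_lt π hi, word_of_lt π hj, Ne, Fin.val_inj, π.apply_eq_iff_eq, Fin.mk.injEq]
  exact hij

lemma consecOcc_iff {p : Fin r → ℕ} {π : Perm (Fin n)} {i : ℕ} :
    ConsecOcc p π i ↔ i + r ≤ n ∧
      ∀ j k : Fin r, word π (i + j) < word π (i + k) ↔ p j < p k := by
  rw [ConsecOcc, ← exists_prop]
  refine exists_congr fun h => forall₂_congr fun j k => ?_
  rw [word_of_lt π (by omega), word_of_lt π (by omega), Fin.lt_def]

lemma consecOcc_p123_iff {π : Perm (Fin n)} {i : ℕ} : ConsecOcc p123 π i ↔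
    i + 3 ≤ n ∧ word π i < word π (i + 1) ∧ word π (i + 1) < word π (i + 2) := by
  rw [consecOcc_iff]
  refine and_congr_right fun _ =>
    ⟨fun h => ⟨by simpa [p123] using h 0 1, by simpa [p123] using h 1 2⟩, ?_⟩
  rintro ⟨h01, h12⟩ j k
  fin_cases j <;> fin_cases k <;> simp [p123] <;> omega

lemma consecOcc_p132_iff {π : Perm (Fin n)} {i : ℕ} : ConsecOcc p132 π i ↔
    i + 3 ≤ n ∧ word π i < word π (i + 2) ∧ word π (i + 2) < word π (i + 1) := by
  rw [consecOcc_iff]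
  refine and_congr_right fun _ =>
    ⟨fun h => ⟨by simpa [p132] using h 0 2, by simpa [p132] using h 2 1⟩, ?_⟩
  rintro ⟨h02, h21⟩ j k
  fin_cases j <;> fin_cases k <;> simp [p132] <;> omega

lemma consecOcc_p231_iff {π : Perm (Fin n)} {i : ℕ} : ConsecOcc p231 π i ↔
    i + 3 ≤ n ∧ word π i < word π (i + 1) ∧ word π (i + 2) < word π i := by
  rw [consecOcc_iff]
  refine and_congr_right fun _ =>
    ⟨fun h => ⟨by simpa [p231] using h 0 1, by simpa [p231] using h 2 0⟩, ?_⟩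
  rintro ⟨h01, h20⟩ j k
  fin_cases j <;> fin_cases k <;> simp [p231] <;> omega

lemma consecOcc_p321_iff {π : Perm (Fin n)} {i : ℕ} : ConsecOcc p321 π i ↔
    i + 3 ≤ n ∧ word π (i + 1) < word π i ∧ word π (i + 2) < word π (i + 1) := by
  rw [consecOcc_iff]
  refine and_congr_right fun _ =>
    ⟨fun h => ⟨by simpa [p321] using h 1 0, by simpa [p321] using h 2 1⟩, ?_⟩
  rintro ⟨h10, h21⟩ j k
  fin_cases j <;> fin_cases k <;> simp [p321] <;> omega

def NoMinFirstWindow (w : ℕ → ℕ) (N : ℕ) : Prop :=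
  ∀ i, i + 3 ≤ N → w (i + 1) < w i ∨ w (i + 2) < w i

lemma avoidsAll_p123_p132_iff {π : Perm (Fin n)} :
    AvoidsAll [p123, p132] π ↔ NoMinFirstWindow (word π) n := by
  simp only [AvoidsAll, List.mem_cons, List.not_mem_nil, or_false, forall_eq_or_imp,
    forall_eq, consecOcc_p123_iff, consecOcc_p132_iff, NoMinFirstWindow]
  refine ⟨fun ⟨h123, h132⟩ i hi => ?_, fun h => ⟨fun i ⟨hi, _⟩ => ?_, fun i ⟨hi, _⟩ => ?_⟩⟩
  · have h01 := word_ne π (i := i) (j := i + 1) (by omega) (by omega) (by omega)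
    have h02 := word_ne π (i := i) (j := i + 2) (by omega) (by omega) (by omega)
    have h12 := word_ne π (i := i + 1) (j := i + 2) (by omega) (by omega) (by omega)
    have := h123 i; have := h132 i
    omega
  all_goals have := h i hi; omega

lemma NoMinFirstWindow.congr {w w' : ℕ → ℕ} {N : ℕ}
    (h : ∀ i j, i < N → j < N → (w i < w j ↔ w' i < w' j)) :
    NoMinFirstWindow w N ↔ NoMinFirstWindow w' N :=
  forall₂_congr fun i hi => or_congr (h _ _ (by omega) (by omega)) (h _ _ (by omega) (by omega))

lemma noMinFirstWindow_add_iff_of_min {w : ℕ → ℕ} {N k : ℕ} (hk : k ≤ 2)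
    (hmin : ∀ j < N, w N < w j) : NoMinFirstWindow w (N + k) ↔ NoMinFirstWindow w N := by
  refine ⟨fun h i hi => h i (by omega), fun h i hi => ?_⟩
  by_cases hiN : i + 3 ≤ N
  · exact h i hiN
  · obtain rfl | rfl : N = i + 1 ∨ N = i + 2 := by omega
    exacts [.inl (hmin i (by omega)), .inr (hmin i (by omega))]

lemma NoMinFirstWindow.apply_eq_zero {π : Perm (Fin n)} (hπ : NoMinFirstWindow (word π) n)
    {i : ℕ} (h0 : word π i = 0) : n ≤ i + 2 := by
  by_contra! h
  have := hπ i (by omega)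
  omega

/-- Insert the value `v` at position `p`; the old entries keep their relative order. -/
def insertAt (p v : Fin (m + 1)) (σ : Perm (Fin m)) : Perm (Fin (m + 1)) :=
  (finSuccEquiv' p).trans ((Equiv.optionCongr σ).trans (finSuccEquiv' v).symm)

@[simp]
lemma insertAt_apply_self (p v : Fin (m + 1)) (σ : Perm (Fin m)) : insertAt p v σ p = v := by
  simp [insertAt]

@[simp]
lemma insertAt_apply_succAbove (p v : Fin (m + 1)) (σ : Perm (Fin m)) (k : Fin m) :
    insertAt p v σ (p.succAbove k) = v.succAbove (σ k) := by
  simp [insertAt]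

lemma insertAt_injective (p v : Fin (m + 1)) : Function.Injective (insertAt p v) := by
  intro σ τ h
  refine Equiv.ext fun k => ?_
  simpa using congrArg (· (p.succAbove k)) h

lemma exists_insertAt_eq (π : Perm (Fin (m + 1))) (p : Fin (m + 1)) :
    ∃ σ, insertAt p (π p) σ = π := by
  let e := (finSuccEquiv' p).symm.trans (π.trans (finSuccEquiv' (π p)))
  refine ⟨Equiv.removeNone e, Equiv.ext fun i => ?_⟩
  refine Fin.succAboveCases p ?_ (fun k => ?_) i
  · simp
  · have he : ∃ x, e (some k) = some x := Option.ne_none_iff_exists'.mp <| by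
      simp [e, finSuccEquiv'_eq_none]
    have := Equiv.removeNone_some e he
    simp only [e, Equiv.trans_apply, finSuccEquiv'_symm_some] at this
    rw [insertAt_apply_succAbove, ← finSuccEquiv'_symm_some, this, Equiv.symm_apply_apply]

lemma val_succAbove (p : Fin (m + 1)) (k : Fin m) :
    (p.succAbove k : ℕ) = if (k : ℕ) < p then (k : ℕ) else k + 1 := by
  unfold Fin.succAbove
  split_ifs <;> simp_all [Fin.lt_def]

lemma word_insertAt (p v : Fin (m + 1)) (σ : Perm (Fin m)) {i : ℕ} (hi : i < m + 1) :
    word (insertAt p v σ) i =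
      if i = p then (v : ℕ) else
        let u := word σ (if i < p then i else i - 1)
        if u < v then u else u + 1 := by
  rw [word_of_lt _ hi]
  by_cases hp : i = p
  · rw [if_pos hp, show (⟨i, hi⟩ : Fin (m + 1)) = p from Fin.ext hp, insertAt_apply_self]
  rw [if_neg hp]
  obtain ⟨k, hk⟩ := Fin.exists_succAbove_eq (x := ⟨i, hi⟩) (y := p) (Fin.ne_of_val_ne hp)
  have hik := congrArg Fin.val hk
  rw [val_succAbove] at hik
  have hj : (if i < p then i else i - 1) = k := by simp only at hik; split_ifs at hik ⊢ <;> omega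
  rw [← hk, insertAt_apply_succAbove, val_succAbove, hj, word_of_lt σ k.isLt]

lemma card_filter_and_apply_eq (P : Perm (Fin (m + 1)) → Prop) [DecidablePred P]
    (p v : Fin (m + 1)) :
    #{π | P π ∧ π p = v} = #{σ : Perm (Fin m) | P (insertAt p v σ)} := by
  symm
  refine Finset.card_nbij (insertAt p v) (fun σ hσ => ?_) (insertAt_injective p v).injOn
    (fun π hπ => ?_)
  · simp_all
  · simp only [coe_filter, mem_univ, true_and, Set.mem_ofPred_eq] at hπ
    obtain ⟨σ, hσ⟩ := exists_insertAt_eq π p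
    rw [hπ.2] at hσ
    exact ⟨σ, by simp [hσ, hπ.1], hσ⟩

lemma card_filter_eq_sum_insertAt_apply (P : Perm (Fin (m + 1)) → Prop) [DecidablePred P]
    (p : Fin (m + 1)) : #{π | P π} = ∑ v, #{σ : Perm (Fin m) | P (insertAt p v σ)} := by
  rw [card_eq_sum_card_fiberwise (f := (· p)) (t := univ) (fun _ _ => mem_coe.mpr (mem_univ _))]
  simp only [filter_filter, card_filter_and_apply_eq]

lemma card_filter_eq_sum_insertAt_position (P : Perm (Fin (m + 1)) → Prop) [DecidablePred P]
    (v : Fin (m + 1)) : #{π | P π} = ∑ p, #{σ : Perm (Fin m) | P (insertAt p v σ)} := by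
  rw [card_eq_sum_card_fiberwise (f := (·.symm v)) (t := univ)
    (fun _ _ => mem_coe.mpr (mem_univ _))]
  simp only [filter_filter, Equiv.symm_apply_eq, eq_comm (a := v), card_filter_and_apply_eq]

lemma noMinFirstWindow_insertAt_last_zero (σ : Perm (Fin m)) :
    NoMinFirstWindow (word (insertAt (Fin.last m) 0 σ)) (m + 1) ↔
      NoMinFirstWindow (word σ) m := by
  have hw : ∀ i < m, word (insertAt (Fin.last m) 0 σ) i = word σ i + 1 := fun i hi => by
    rw [word_insertAt _ _ _ (by omega)]
    simp [hi.ne, hi]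
  have h0 : word (insertAt (Fin.last m) 0 σ) m = 0 := by
    rw [word_insertAt _ _ _ (by omega)]
    simp
  rw [noMinFirstWindow_add_iff_of_min (k := 1) (by norm_num)
    (fun j hj => by rw [h0, hw j hj]; omega)]
  exact NoMinFirstWindow.congr fun i j hi hj => by rw [hw i hi, hw j hj]; omega

lemma noMinFirstWindow_insertAt_zero_insertAt_last (x : Fin (n + 1)) (τ : Perm (Fin n)) :
    NoMinFirstWindow (word (insertAt (Fin.last n).castSucc 0 (insertAt (Fin.last n) x τ)))
      (n + 2) ↔ NoMinFirstWindow (word τ) n := by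
  set π := insertAt (Fin.last n).castSucc 0 (insertAt (Fin.last n) x τ)
  have hw : ∀ i < n, word π i = (if word τ i < x then word τ i else word τ i + 1) + 1 :=
    fun i hi => by
      rw [word_insertAt _ _ _ (by omega)]
      simp only [Fin.val_castSucc, Fin.val_last, hi.ne, hi, if_false, if_true, Fin.val_zero,
        Nat.not_lt_zero]
      rw [word_insertAt _ _ _ (by omega)]
      simp [hi.ne, hi]
  have h0 : word π n = 0 := by
    rw [word_insertAt _ _ _ (by omega)]
    simp
  rw [noMinFirstWindow_add_iff_of_min (k := 2) le_rfl
    (fun j hj => by rw [h0, hw j hj]; omega)]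
  refine NoMinFirstWindow.congr fun i j hi hj => ?_
  rw [hw i hi, hw j hj]
  have := word_ne τ hi hj
  split_ifs <;> omega

lemma NoMinFirstWindow.insertAt_last {σ : Perm (Fin m)} (hσ : NoMinFirstWindow (word σ) m)
    {i : ℕ} (h321 : ConsecOcc p321 σ i) :
    NoMinFirstWindow (word (insertAt ⟨i + 2, by have := h321.1; omega⟩ (Fin.last m) σ))
      (m + 1) := by
  obtain ⟨hi, hd1, hd2⟩ := consecOcc_p321_iff.mp h321
  set π := insertAt ⟨i + 2, by omega⟩ (Fin.last m) σ
  have hlt : ∀ k < i + 2, word π k = word σ k := fun k hk => by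
    rw [word_insertAt _ _ _ (by omega)]
    simp [hk, hk.ne, word_lt σ (i := k) (by omega)]
  have hmax : word π (i + 2) = m := by
    rw [word_insertAt _ _ _ (by omega)]
    simp
  have hgt : ∀ k, i + 2 ≤ k → k < m → word π (k + 1) = word σ k := fun k hk hkm => by
    rw [word_insertAt _ _ _ (by omega)]
    simp [show k ≠ i + 1 by omega, show ¬ k + 1 < i + 2 by omega, word_lt σ hkm]
  intro j hj
  rcases (show j + 2 < i + 2 ∨ j = i ∨ j = i + 1 ∨ j = i + 2 ∨ i + 2 < j by omega)
    with h | h | h | h | h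
  · rw [hlt j (by omega), hlt (j + 1) (by omega), hlt (j + 2) h]
    exact hσ j (by omega)
  · rw [h, hlt i (by omega), hlt (i + 1) (by omega)]
    exact .inl hd1
  · rw [h, hlt (i + 1) (by omega), show i + 1 + 2 = i + 2 + 1 by ring,
      hgt (i + 2) le_rfl (by omega)]
    exact .inr hd2
  · rw [h, hmax, hgt (i + 2) le_rfl (by omega)]
    exact .inl (word_lt σ (by omega))
  · obtain ⟨k, rfl⟩ : ∃ k, j = k + 1 := ⟨j - 1, by omega⟩
    rw [hgt k (by omega) (by omega),
      hgt (k + 1) (by omega) (by omega), show k + 1 + 2 = k + 2 + 1 by ring,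
      hgt (k + 2) (by omega) (by omega)]
    exact hσ k (by omega)

open scoped Classical

/-- `Av_n(123, 132)`, see `avoidsAll_p123_p132_iff`. -/
noncomputable def avoiders (n : ℕ) : Finset (Perm (Fin n)) :=
  {π | NoMinFirstWindow (word π) n}

lemma mem_avoiders {π : Perm (Fin n)} : π ∈ avoiders n ↔ NoMinFirstWindow (word π) n := by
  simp [avoiders]

lemma card_avoiders_of_le_two (h : n ≤ 2) : #(avoiders n) = n.factorial := by
  rw [avoiders, filter_true_of_mem fun π _ i hi => absurd hi (by omega), card_univ,
    Fintype.card_perm, Fintype.card_fin]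

lemma card_avoiders_add_two (n : ℕ) :
    #(avoiders (n + 2)) = #(avoiders (n + 1)) + (n + 1) * #(avoiders n) := by
  set z : Fin (n + 2) := (Fin.last n).castSucc
  have hzero : ∀ π ∈ avoiders (n + 2), π.symm 0 ∈ ({Fin.last (n + 1), z} : Finset _) := by
    intro π hπ
    have hpos := (mem_avoiders.mp hπ).apply_eq_zero (i := π.symm 0) (by
      rw [word_of_lt _ (π.symm 0).isLt]; simp)
    simp only [mem_insert, mem_singleton, Fin.ext_iff, Fin.val_last, z, Fin.val_castSucc]
    omega
  have hsymm (π : Perm (Fin (n + 2))) (p : Fin (n + 2)) : π.symm 0 = p ↔ π p = 0 :=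
    π.symm_apply_eq.trans eq_comm
  have hlast : #{π ∈ avoiders (n + 2) | π.symm 0 = Fin.last (n + 1)} = #(avoiders (n + 1)) := by
    simp only [avoiders, filter_filter, hsymm]
    rw [card_filter_and_apply_eq]
    simp only [noMinFirstWindow_insertAt_last_zero]
  have hz : #{π ∈ avoiders (n + 2) | π.symm 0 = z} = (n + 1) * #(avoiders n) := by
    simp only [avoiders, filter_filter, hsymm]
    rw [card_filter_and_apply_eq, card_filter_eq_sum_insertAt_apply _ (Fin.last n)]
    simp only [z, noMinFirstWindow_insertAt_zero_insertAt_last, sum_const, card_univ,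
      Fintype.card_fin, smul_eq_mul]
  rw [card_eq_sum_card_fiberwise hzero, sum_pair (by simp [Fin.ext_iff, z]), hlast, hz]

lemma occCount_eq_card_filter (p : Fin r → ℕ) (π : Perm (Fin n)) :
    occCount p π = #{i ∈ range (n + 1 - r) | ConsecOcc p π i} := by
  have hmem (i : ℕ) :
      ConsecOcc p π i ↔ i ∈ ({i ∈ range (n + 1 - r) | ConsecOcc p π i} : Finset ℕ) := by
    simp only [mem_filter, mem_range, iff_and_self]
    exact fun h => by have := h.1; omega
  rw [occCount, Nat.card_congr (Equiv.subtypeEquivRight hmem), Nat.card_eq_fintype_card,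
    Fintype.card_coe]

/-- In an avoider every ascent starts a `231`, so each position contributes
`1 + [ascent at i] - [ascent at i + 1]` to `2 · #231 + #321`, and the sum telescopes. -/
lemma NoMinFirstWindow.occCount_bounds {π : Perm (Fin n)} (hπ : NoMinFirstWindow (word π) n) :
    2 * occCount p231 π + occCount p321 π ≤ n ∧
      n ≤ 2 * occCount p231 π + occCount p321 π + 3 := by
  set asc : ℕ → ℤ := fun i => if word π i < word π (i + 1) then 1 else 0
  have hasc : ∀ i, asc i = 0 ∨ asc i = 1 := fun i => by simp only [asc]; split_ifs <;> simp
  have hterm : ∀ i ∈ range (n - 2), 2 * (if ConsecOcc p231 π i then 1 else 0 : ℤ) +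
      (if ConsecOcc p321 π i then 1 else 0 : ℤ) = 1 - (asc (i + 1) - asc i) := by
    intro i hi
    rw [mem_range] at hi
    have := hπ i (by omega)
    have := word_ne π (i := i) (j := i + 1) (by omega) (by omega) (by omega)
    have := word_ne π (i := i + 1) (j := i + 2) (by omega) (by omega) (by omega)
    simp only [consecOcc_p231_iff, consecOcc_p321_iff, asc, show i + 1 + 1 = i + 2 from rfl]
    split_ifs <;> omega
  have hsum : ((2 * occCount p231 π + occCount p321 π : ℕ) : ℤ) =
      (n - 2 : ℕ) - (asc (n - 2) - asc 0) := by
    rw [occCount_eq_card_filter, occCount_eq_card_filter, card_filter, card_filter]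
    push_cast
    rw [mul_sum, ← sum_add_distrib, sum_congr rfl hterm, sum_sub_distrib, sum_range_sub]
    simp
  have hsmall : n < 2 → asc (n - 2) = asc 0 := fun h => by rw [show n - 2 = 0 by omega]
  have := hasc 0; have := hasc (n - 2)
  omega

lemma classCard_eq_card_avoiders : classCard n (AvoidsAll [p123, p132]) = #(avoiders n) := by
  rw [classCard, Nat.card_eq_fintype_card, Fintype.card_subtype, avoiders]
  simp only [avoidsAll_p123_p132_iff]

lemma totOcc_eq_sum_avoiders (p : Fin r → ℕ) :
    totOcc p (AvoidsAll (n := n) [p123, p132]) = ∑ π ∈ avoiders n, occCount p π := by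
  rw [totOcc, avoiders, sum_filter]
  simp only [avoidsAll_p123_p132_iff]

lemma sum_occCount_bounds :
    2 * ∑ π ∈ avoiders n, occCount p231 π + ∑ π ∈ avoiders n, occCount p321 π ≤
        n * #(avoiders n) ∧
      n * #(avoiders n) ≤
        2 * ∑ π ∈ avoiders n, occCount p231 π + ∑ π ∈ avoiders n, occCount p321 π +
          3 * #(avoiders n) := by
  simp only [mul_sum, ← sum_add_distrib, card_eq_sum_ones, mul_one]
  exact ⟨sum_le_sum fun π hπ => (mem_avoiders.mp hπ).occCount_bounds.1,
    sum_le_sum fun π hπ => (mem_avoiders.mp hπ).occCount_bounds.2⟩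

lemma occCount_p321_le_card_insertAt_last {π : Perm (Fin n)} (hπ : π ∈ avoiders n) :
    occCount p321 π ≤ #{p | insertAt p (Fin.last n) π ∈ avoiders (n + 1)} := by
  rw [occCount_eq_card_filter]
  refine card_le_card_of_surjOn (fun p : Fin (n + 1) => (p : ℕ) - 2) fun i hi => ?_
  simp only [coe_filter, mem_range, Set.mem_ofPred_eq] at hi
  refine ⟨⟨i + 2, by have := hi.2.1; omega⟩, ?_, by simp⟩
  simpa [mem_avoiders] using (mem_avoiders.mp hπ).insertAt_last hi.2

lemma sum_occCount_p321_le : ∑ π ∈ avoiders n, occCount p321 π ≤ #(avoiders (n + 1)) := by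
  calc ∑ π ∈ avoiders n, occCount p321 π
      ≤ ∑ π ∈ avoiders n, #{p | insertAt p (Fin.last n) π ∈ avoiders (n + 1)} :=
        sum_le_sum fun _ => occCount_p321_le_card_insertAt_last
    _ ≤ ∑ π, #{p | insertAt p (Fin.last n) π ∈ avoiders (n + 1)} :=
        sum_le_sum_of_subset (subset_univ _)
    _ = ∑ p, #{π | insertAt p (Fin.last n) π ∈ avoiders (n + 1)} := by
        simp only [card_filter]
        exact sum_comm
    _ = #(avoiders (n + 1)) := by
        rw [← card_filter_eq_sum_insertAt_position (· ∈ avoiders (n + 1)), filter_univ_mem]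

lemma bounds_of_involution_recurrence {a : ℕ → ℝ} (h0 : a 0 = 1) (h1 : a 1 = 1)
    (hrec : ∀ n, a (n + 2) = a (n + 1) + (n + 1) * a n) (n : ℕ) :
    0 < a n ∧ √(n + 1) * a n ≤ a (n + 1) ∧ a (n + 1) ≤ (1 + √(n + 1)) * a n := by
  induction n with
  | zero => norm_num [h0, h1]
  | succ n ih =>
    obtain ⟨hpos, hlow, hup⟩ := ih
    set s := √((n : ℝ) + 1)
    set t := √((n + 1 : ℕ) + 1 : ℝ) with ht
    have hs0 : 0 ≤ s := Real.sqrt_nonneg _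
    have hss : s ^ 2 = n + 1 := Real.sq_sqrt (by positivity)
    have htt : t ^ 2 = s ^ 2 + 1 := by rw [ht, Real.sq_sqrt (by positivity), hss]; push_cast; ring
    have hst : s ≤ t := Real.sqrt_le_sqrt (by push_cast; linarith)
    have ht0 : 0 ≤ t := Real.sqrt_nonneg _
    have hB : 0 ≤ a (n + 1) := by nlinarith
    rw [hrec, ← hss]
    refine ⟨by nlinarith, ?_, ?_⟩
    · -- the squares of the two sides differ by `s ^ 2`
      have hkey : t * (1 + s) ≤ 1 + s + s ^ 2 := by
        nlinarith [sq_nonneg (t * (1 + s) - (1 + s + s ^ 2))]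
      have : (1 + s) * (t * a (n + 1)) ≤ (1 + s) * (a (n + 1) + s ^ 2 * a n) := by
        nlinarith [mul_le_mul_of_nonneg_right hkey hB,
          mul_le_mul_of_nonneg_left hup (sq_nonneg s)]
      exact le_of_mul_le_mul_left this (by positivity)
    · nlinarith [mul_le_mul_of_nonneg_left hlow hs0, mul_le_mul_of_nonneg_right hst hB]

lemma one_add_sqrt_succ_div_le (hn : 1 ≤ n) : (1 + √(n + 1)) / n ≤ 3 / √n := by
  have hn' : (1 : ℝ) ≤ n := by exact_mod_cast hn
  have hs : 1 ≤ √(n : ℝ) := Real.one_le_sqrt.mpr hn'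
  have hsq : √(n : ℝ) ^ 2 = n := Real.sq_sqrt (by positivity)
  have hsucc : √((n : ℝ) + 1) ≤ √n + 1 := Real.sqrt_le_iff.mpr ⟨by positivity, by nlinarith⟩
  rw [div_le_div_iff₀ (by positivity) (by positivity)]
  nlinarith [mul_le_mul_of_nonneg_right (show 1 + √((n : ℝ) + 1) ≤ 3 * √n by linarith)
    (Real.sqrt_nonneg (n : ℝ))]

lemma tendsto_div_mul_zero_of_le_succ {a T : ℕ → ℝ} (h0 : a 0 = 1) (h1 : a 1 = 1)
    (hrec : ∀ n, a (n + 2) = a (n + 1) + (n + 1) * a n) (hT0 : ∀ n, 0 ≤ T n)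
    (hT : ∀ n, T n ≤ a (n + 1)) : Tendsto (fun n : ℕ => T n / (n * a n)) atTop (𝓝 0) := by
  have hlim : Tendsto (fun n : ℕ => 3 / √(n : ℝ)) atTop (𝓝 0) :=
    tendsto_const_nhds.div_atTop (Real.tendsto_sqrt_atTop.comp tendsto_natCast_atTop_atTop)
  refine squeeze_zero' (.of_forall fun n => div_nonneg (hT0 n)
    (mul_nonneg n.cast_nonneg (bounds_of_involution_recurrence h0 h1 hrec n).1.le)) ?_ hlim
  filter_upwards [eventually_ge_atTop 1] with n hn
  obtain ⟨hpos, -, hup⟩ := bounds_of_involution_recurrence h0 h1 hrec n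
  calc T n / (n * a n) ≤ (1 + √(n + 1)) * a n / (n * a n) := by gcongr; exact (hT n).trans hup
    _ = (1 + √(n + 1)) / n := mul_div_mul_right _ _ hpos.ne'
    _ ≤ 3 / √n := one_add_sqrt_succ_div_le hn

lemma tendsto_div_mul_half_of_bounds {a T U : ℕ → ℝ} (ha : ∀ n, 0 < a n)
    (hT : Tendsto (fun n : ℕ => T n / (n * a n)) atTop (𝓝 0))
    (hup : ∀ n, 2 * U n + T n ≤ n * a n) (hlow : ∀ n, n * a n ≤ 2 * U n + T n + 3 * a n) :
    Tendsto (fun n : ℕ => U n / (n * a n)) atTop (𝓝 (1 / 2)) := by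
  have hsum : Tendsto (fun n : ℕ => (2 * U n + T n) / (n * a n)) atTop (𝓝 1) := by
    have hlim : Tendsto (fun n : ℕ => 1 - 3 / (n : ℝ)) atTop (𝓝 1) := by
      simpa using tendsto_const_nhds.sub (tendsto_const_div_atTop_nhds_zero_nat (3 : ℝ))
    refine tendsto_of_tendsto_of_tendsto_of_le_of_le' hlim tendsto_const_nhds ?_ ?_
    all_goals filter_upwards [eventually_ge_atTop 1] with n hn
    all_goals have hn' : (0 : ℝ) < n := by exact_mod_cast hn
    all_goals have := ha n
    · have : (1 - 3 / (n : ℝ)) * (n * a n) = n * a n - 3 * a n := by field_simp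
      rw [le_div_iff₀ (by positivity), this]
      linarith [hlow n]
    · rw [div_le_one (by positivity)]
      exact hup n
  have := (hsum.sub hT).div_const 2
  norm_num at this
  convert this using 2 with n
  ring

end ConsecPattern

theorem stmt9 :
    Filter.Tendsto (fun n : ℕ =>
        (totOcc p321 (AvoidsAll (n := n) [p123, p132]) : ℝ)
          / (n * classCard n (AvoidsAll [p123, p132])))
      Filter.atTop (nhds 0)
    ∧ Filter.Tendsto (fun n : ℕ =>
        (totOcc p231 (AvoidsAll (n := n) [p123, p132]) : ℝ)
          / (n * classCard n (AvoidsAll [p123, p132])))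
      Filter.atTop (nhds (1 / 2)) := by
  open ConsecPattern in
  have h0 : (#(avoiders 0) : ℝ) = 1 := by simp [card_avoiders_of_le_two]
  have h1 : (#(avoiders 1) : ℝ) = 1 := by simp [card_avoiders_of_le_two]
  have hrec (n : ℕ) :
      (#(avoiders (n + 2)) : ℝ) = #(avoiders (n + 1)) + (n + 1) * #(avoiders n) := by
    exact_mod_cast card_avoiders_add_two n
  have hpos (n : ℕ) : (0 : ℝ) < #(avoiders n) :=
    (bounds_of_involution_recurrence (a := fun n => (#(avoiders n) : ℝ)) h0 h1 hrec n).1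
  have h321 := tendsto_div_mul_zero_of_le_succ (a := fun n => (#(avoiders n) : ℝ))
    (T := fun n => (∑ π ∈ avoiders n, occCount p321 π : ℕ)) h0 h1 hrec
    (fun _ => Nat.cast_nonneg _) (fun _ => Nat.cast_le.mpr sum_occCount_p321_le)
  simp only [totOcc_eq_sum_avoiders, classCard_eq_card_avoiders]
  refine ⟨h321, tendsto_div_mul_half_of_bounds hpos h321 (fun _ => ?_) (fun _ => ?_)⟩
  · exact_mod_cast sum_occCount_bounds.1
  · exact_mod_cast sum_occCount_bounds.2
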